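/- In the braid group B_n, for 1 ≤ r < p < q ≤ n, the quotient a_{p,q}^{−1} a_{r,q} equals δ_{p,q−1} δ_{r,p−1} a_{p−1,q} δ_{r,q−1}^{−1}, and hence is σ_{q−1}-positive. -/

import Mathlib

/-- Relations of the braid group `B_n` on generators `σ_1, …, σ_{n-1}`
(indexed by natural numbers; the generators of index `0` or `≥ n` are killed,
so that the presented group is exactly `B_n`). -/
def braidRels (n : ℕ) : Set (FreeGroup ℕ) :=
  {r | (∃ i j : ℕ, 1 ≤ i ∧ i + 2 ≤ j ∧ j ≤ n - 1 ∧
          r = FreeGroup.of i * FreeGroup.of j * (FreeGroup.of i)⁻¹ * (FreeGroup.of j)⁻¹) ∨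
       (∃ i : ℕ, 1 ≤ i ∧ i + 1 ≤ n - 1 ∧
          r = FreeGroup.of i * FreeGroup.of (i + 1) * FreeGroup.of i *
              (FreeGroup.of (i + 1) * FreeGroup.of i * FreeGroup.of (i + 1))⁻¹) ∨
       (∃ i : ℕ, (i = 0 ∨ n ≤ i) ∧ r = FreeGroup.of i)}

/-- The braid group `B_n`. -/
def BraidGroup (n : ℕ) : Type := PresentedGroup (braidRels n)

instance (n : ℕ) : Group (BraidGroup n) := by unfold BraidGroup; infer_instance

/-- The Artin generator `σ_i` of `B_n` (nontrivial for `1 ≤ i ≤ n-1`). -/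
def σ (n i : ℕ) : BraidGroup n := PresentedGroup.of i

/-- `δ_{p,q} = σ_p σ_{p+1} ⋯ σ_{q-1}` (equal to `1` when `q ≤ p`). -/
def δδ (n p q : ℕ) : BraidGroup n :=
  ((List.range (q - p)).map (fun k => σ n (p + k))).prod

/-- The Birman–Ko–Lee generator
`a_{p,q} = σ_p ⋯ σ_{q-2} σ_{q-1} σ_{q-2}⁻¹ ⋯ σ_p⁻¹ = δ_{p,q-1} σ_{q-1} δ_{p,q-1}⁻¹`. -/
def a (n p q : ℕ) : BraidGroup n :=
  δδ n p (q - 1) * σ n (q - 1) * (δδ n p (q - 1))⁻¹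

/-- A braid of `B_n` is `σ_i`-positive if it is represented by a word in the
letters `σ_j^{±1}` containing at least one `σ_i`, no `σ_i⁻¹`,
and no letter `σ_j^{±1}` with `j > i`. -/
def SigmaPositive (n i : ℕ) (β : BraidGroup n) : Prop :=
  ∃ w : List (ℕ × Bool),
    ((w.map (fun l => if l.2 then σ n l.1 else (σ n l.1)⁻¹)).prod = β) ∧
    (i, true) ∈ w ∧ (i, false) ∉ w ∧ ∀ l ∈ w, l.1 ≤ i

/-!
Conjugation by `δ_{r,s}` shifts indices: `δ_{r,s} σ_i δ_{r,s}⁻¹ = σ_{i+1}` for `r ≤ i ≤ s - 2`,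
one braid relation per generator. Hence `δ_{r,q} δ_{p-1,q-1} δ_{r,q}⁻¹ = δ_{p,q}`, which, after writing
`δ_{p,q} = δ_{p,q-1} σ_{q-1}` and `δ_{r,q-1} = δ_{r,p-1} δ_{p-1,q-1}`, is the claimed identity up to
free cancellation. In the right-hand side the only letter of index `≥ q - 1` is the single `σ_{q-1}`
inside `a_{p-1,q}`, so the quotient is `σ_{q-1}`-positive.
-/

section

variable {n : ℕ}

lemma mk_eq_one_of_mem_rels {g : FreeGroup ℕ} (h : g ∈ braidRels n) :
    (PresentedGroup.mk (braidRels n) g : BraidGroup n) = 1 :=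
  (QuotientGroup.eq_one_iff g).mpr (Subgroup.subset_normalClosure h)

lemma σ_eq_one {i : ℕ} (h : i = 0 ∨ n ≤ i) : σ n i = 1 :=
  mk_eq_one_of_mem_rels (Or.inr (Or.inr ⟨i, h, rfl⟩))

lemma σ_commute {i j : ℕ} (h : i + 2 ≤ j) : Commute (σ n i) (σ n j) := by
  rcases Nat.eq_zero_or_pos i with rfl | hi
  · rw [σ_eq_one (Or.inl rfl)]; exact Commute.one_left _
  rcases le_or_gt n j with hj | hj
  · rw [σ_eq_one (Or.inr hj)]; exact Commute.one_right _
  have hrel := mk_eq_one_of_mem_rels (n := n) (Or.inl ⟨i, j, hi, h, by omega, rfl⟩)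
  simp only [map_mul, map_inv] at hrel
  exact commutatorElement_eq_one_iff_commute.mp hrel

lemma σ_braid {i : ℕ} (hi : 1 ≤ i) (hin : i + 2 ≤ n) :
    σ n i * σ n (i + 1) * σ n i = σ n (i + 1) * σ n i * σ n (i + 1) := by
  have hrel := mk_eq_one_of_mem_rels (n := n) (Or.inr (Or.inl ⟨i, hi, by omega, rfl⟩))
  simp only [map_mul, map_inv] at hrel
  exact mul_inv_eq_one.mp hrel

lemma δδ_of_le {p q : ℕ} (h : q ≤ p) : δδ n p q = 1 := by
  simp [δδ, Nat.sub_eq_zero_of_le h]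

lemma δδ_succ {p q : ℕ} (h : p ≤ q) : δδ n p (q + 1) = δδ n p q * σ n q := by
  rw [δδ, δδ, show q + 1 - p = q - p + 1 by omega, List.range_succ, List.map_append,
    List.prod_append, List.map_singleton, List.prod_singleton, Nat.add_sub_cancel' h]

lemma δδ_mul_δδ {p s q : ℕ} (hps : p ≤ s) (hsq : s ≤ q) : δδ n p s * δδ n s q = δδ n p q := by
  induction q, hsq using Nat.le_induction with
  | base => rw [δδ_of_le le_rfl, mul_one]
  | succ q hsq ih => rw [δδ_succ hsq, δδ_succ (hps.trans hsq), ← mul_assoc, ih]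

lemma commute_σ_δδ {i p q : ℕ} (h : q + 1 ≤ i ∨ i + 2 ≤ p) : Commute (σ n i) (δδ n p q) := by
  refine Commute.list_prod_right _ _ fun y hy => ?_
  obtain ⟨k, hk, rfl⟩ := List.mem_map.mp hy
  rw [List.mem_range] at hk
  rcases h with h | h
  · exact (σ_commute (by omega)).symm
  · exact σ_commute (by omega)

lemma conj_δδ_σ {r s i : ℕ} (hr : 1 ≤ r) (hri : r ≤ i) (his : i + 2 ≤ s) (hsn : s ≤ n) :
    MulAut.conj (δδ n r s) (σ n i) = σ n (i + 1) := by
  have hδ : δδ n r s = δδ n r i * (σ n i * σ n (i + 1)) * δδ n (i + 2) s := by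
    rw [← δδ_mul_δδ (by omega : r ≤ i + 2) his, δδ_succ (by omega), δδ_succ hri, mul_assoc (δδ n r i)]
  have hfar : δδ n (i + 2) s * σ n i * (δδ n (i + 2) s)⁻¹ = σ n i := by
    rw [(commute_σ_δδ (Or.inr le_rfl)).symm.eq, mul_inv_cancel_right]
  have hnear : δδ n r i * σ n (i + 1) * (δδ n r i)⁻¹ = σ n (i + 1) := by
    rw [(commute_σ_δδ (Or.inl le_rfl)).symm.eq, mul_inv_cancel_right]
  rw [MulAut.conj_apply, hδ]
  calc δδ n r i * (σ n i * σ n (i + 1)) * δδ n (i + 2) s * σ n i *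
        (δδ n r i * (σ n i * σ n (i + 1)) * δδ n (i + 2) s)⁻¹
      = δδ n r i * (σ n i * σ n (i + 1)) * (δδ n (i + 2) s * σ n i * (δδ n (i + 2) s)⁻¹) *
          (σ n (i + 1))⁻¹ * (σ n i)⁻¹ * (δδ n r i)⁻¹ := by group
    _ = δδ n r i * (σ n i * σ n (i + 1) * σ n i) * (σ n (i + 1))⁻¹ * (σ n i)⁻¹ * (δδ n r i)⁻¹ := by
          rw [hfar]; group
    _ = δδ n r i * σ n (i + 1) * (δδ n r i)⁻¹ := by rw [σ_braid (by omega) (by omega)]; group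
    _ = σ n (i + 1) := hnear

lemma conj_δδ_δδ {r s p q : ℕ} (hr : 1 ≤ r) (hrp : r ≤ p) (hqs : q + 1 ≤ s) (hsn : s ≤ n) :
    MulAut.conj (δδ n r s) (δδ n p q) = δδ n (p + 1) (q + 1) := by
  change MulAut.conj _ ((List.range (q - p)).map fun k => σ n (p + k)).prod =
    ((List.range (q + 1 - (p + 1))).map fun k => σ n (p + 1 + k)).prod
  rw [map_list_prod, List.map_map, Nat.add_sub_add_right]
  refine congrArg List.prod (List.map_congr_left fun k hk => ?_)
  rw [List.mem_range] at hk
  rw [Function.comp_apply, conj_δδ_σ hr (by omega) (by omega) hsn, Nat.add_right_comm]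

lemma inv_a_mul_a {r p q : ℕ} (hr : 1 ≤ r) (hrp : r ≤ p) (hpq : p < q) (hqn : q + 1 ≤ n) :
    (a n (p + 1) (q + 1))⁻¹ * a n r (q + 1) =
      δδ n (p + 1) q * δδ n r p * a n p (q + 1) * (δδ n r q)⁻¹ := by
  have hconj := conj_δδ_δδ (n := n) hr hrp le_rfl hqn
  rw [MulAut.conj_apply, δδ_succ (by omega), δδ_succ (by omega)] at hconj
  simp only [a, Nat.add_sub_cancel]
  rw [← δδ_mul_δδ hrp hpq.le] at hconj ⊢
  rw [eq_mul_inv_of_mul_eq hconj.symm]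
  group

def braidLetter (n : ℕ) (l : ℕ × Bool) : BraidGroup n := if l.2 then σ n l.1 else (σ n l.1)⁻¹

lemma braidLetter_flip (l : ℕ × Bool) : braidLetter n (l.1, !l.2) = (braidLetter n l)⁻¹ := by
  obtain ⟨i, _ | _⟩ := l <;> simp [braidLetter]

def lowerBraids (n i : ℕ) : Subgroup (BraidGroup n) := Subgroup.closure (σ n '' Set.Iio i)

lemma δδ_mem_lowerBraids {i p q : ℕ} (h : q ≤ i) : δδ n p q ∈ lowerBraids n i := by
  refine (lowerBraids n i).list_prod_mem fun x hx => ?_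
  obtain ⟨k, hk, rfl⟩ := List.mem_map.mp hx
  rw [List.mem_range] at hk
  exact Subgroup.subset_closure ⟨p + k, Set.mem_Iio.mpr (by omega), rfl⟩

lemma exists_word_of_mem_lowerBraids {i : ℕ} {β : BraidGroup n} (hβ : β ∈ lowerBraids n i) :
    ∃ w : List (ℕ × Bool), (w.map (braidLetter n)).prod = β ∧ ∀ l ∈ w, l.1 < i := by
  induction hβ using Subgroup.closure_induction with
  | mem x hx =>
    obtain ⟨j, hj, rfl⟩ := hx
    exact ⟨[(j, true)], by simp [braidLetter], by simpa using hj⟩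
  | one => exact ⟨[], rfl, by simp⟩
  | mul x y _ _ hx hy =>
    obtain ⟨u, rfl, hu⟩ := hx
    obtain ⟨v, rfl, hv⟩ := hy
    refine ⟨u ++ v, by simp, fun l hl => ?_⟩
    rcases List.mem_append.mp hl with hl | hl
    exacts [hu l hl, hv l hl]
  | inv x _ hx =>
    obtain ⟨u, rfl, hu⟩ := hx
    refine ⟨(u.map fun l => (l.1, !l.2)).reverse, ?_, fun l hl => ?_⟩
    · simp [List.prod_inv_reverse, Function.comp_def, braidLetter_flip]
    · obtain ⟨l', hl', rfl⟩ := List.mem_map.mp (List.mem_reverse.mp hl)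
      exact hu l' hl'

lemma sigmaPositive_mul_σ_mul {i : ℕ} {β γ : BraidGroup n} (hβ : β ∈ lowerBraids n i)
    (hγ : γ ∈ lowerBraids n i) : SigmaPositive n i (β * σ n i * γ) := by
  obtain ⟨u, rfl, hu⟩ := exists_word_of_mem_lowerBraids hβ
  obtain ⟨v, rfl, hv⟩ := exists_word_of_mem_lowerBraids hγ
  have hletters : ∀ l ∈ u ++ (i, true) :: v, l = (i, true) ∨ l.1 < i := by
    simp only [List.mem_append, List.mem_cons]
    rintro l (hl | hl | hl)
    exacts [.inr (hu l hl), .inl hl, .inr (hv l hl)]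
  refine ⟨u ++ (i, true) :: v, ?_, by simp, fun h => ?_, fun l hl => ?_⟩
  · change ((u ++ (i, true) :: v).map (braidLetter n)).prod = _
    simp [braidLetter, mul_assoc]
  · rcases hletters _ h with h | h
    · simp at h
    · exact lt_irrefl i h
  · rcases hletters l hl with rfl | h
    exacts [le_rfl, h.le]

end

theorem stmt18 (n p q r : ℕ) (hr : 1 ≤ r) (hrp : r < p) (hpq : p < q) (hqn : q ≤ n) :
    (a n p q)⁻¹ * a n r q =
      δδ n p (q - 1) * δδ n r (p - 1) * a n (p - 1) q * (δδ n r (q - 1))⁻¹ ∧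
    SigmaPositive n (q - 1) ((a n p q)⁻¹ * a n r q) := by
  obtain ⟨p, rfl⟩ : ∃ p', p = p' + 1 := ⟨p - 1, by omega⟩
  obtain ⟨q, rfl⟩ : ∃ q', q = q' + 1 := ⟨q - 1, by omega⟩
  simp only [Nat.add_sub_cancel]
  have hid := inv_a_mul_a (p := p) (q := q) hr (by omega) (by omega) hqn
  refine ⟨hid, ?_⟩
  rw [hid, a, Nat.add_sub_cancel,
    show δδ n (p + 1) q * δδ n r p * (δδ n p q * σ n q * (δδ n p q)⁻¹) * (δδ n r q)⁻¹ =
      δδ n (p + 1) q * δδ n r p * δδ n p q * σ n q * ((δδ n p q)⁻¹ * (δδ n r q)⁻¹) by group]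
  exact sigmaPositive_mul_σ_mul
    (mul_mem (mul_mem (δδ_mem_lowerBraids le_rfl) (δδ_mem_lowerBraids (by omega)))
      (δδ_mem_lowerBraids le_rfl))
    (mul_mem (inv_mem (δδ_mem_lowerBraids le_rfl)) (inv_mem (δδ_mem_lowerBraids le_rfl)))
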